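/- arXiv:1304.6513 — 8 statements merged into one kernel-verified Lean document; each statement's English description precedes it below -/
import Mathlib

section
/- Let u0 : ℝ → ℝ be continuously differentiable and bounded, with bounded derivative, and suppose M := sup_{ξ∈ℝ}(−6 u0'(ξ)) satisfies 0 < M < ∞; set t_c := 1/M. Then for every t ∈ [0, t_c), the characteristic map F_t(ξ) = ξ + 6 t u0(ξ) is a strictly increasing bijection from ℝ onto ℝ. -/
/-- If `u0` is `C¹` and bounded with bounded derivative, and
`M := sup_ξ (−6 u0'(ξ))` satisfies `0 < M < ∞`, then for every
`t ∈ [0, t_c)` with `t_c = 1/M`, the characteristic map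
`F_t(ξ) = ξ + 6 t u0(ξ)` is a strictly increasing bijection of `ℝ`. -/
theorem hopf_characteristic_map_bijective
    (u0 : ℝ → ℝ) (hu0 : ContDiff ℝ 1 u0)
    (hbdd : ∃ C : ℝ, ∀ x : ℝ, |u0 x| ≤ C)
    (hbdd' : ∃ C : ℝ, ∀ x : ℝ, |deriv u0 x| ≤ C)
    (hBdd : BddAbove (Set.range fun ξ : ℝ => -6 * deriv u0 ξ))
    (M : ℝ) (hM : M = ⨆ ξ : ℝ, -6 * deriv u0 ξ) (hMpos : 0 < M)
    (tc : ℝ) (htc : tc = 1 / M) :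
    ∀ t : ℝ, 0 ≤ t → t < tc →
      StrictMono (fun ξ : ℝ => ξ + 6 * t * u0 ξ) ∧
      Function.Bijective (fun ξ : ℝ => ξ + 6 * t * u0 ξ) := by
  intro t ht htlt
  have hdiffu : Differentiable ℝ u0 := hu0.differentiable one_ne_zero
  set F : ℝ → ℝ := fun ξ : ℝ => ξ + 6 * t * u0 ξ with hF
  have hdiffF : Differentiable ℝ F := by
    intro x
    exact (differentiable_id.differentiableAt).add
      (((hdiffu x).const_mul (6 * t)))
  have htM : t * M < 1 := by
    have : t < 1 / M := htc ▸ htlt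
    calc t * M < (1 / M) * M := by
          exact mul_lt_mul_of_pos_right this hMpos
      _ = 1 := by field_simp
  have hderivpos : ∀ x : ℝ, 0 < deriv F x := by
    intro x
    have hx : -6 * deriv u0 x ≤ M := by
      rw [hM]
      exact le_ciSup hBdd x
    have h1 : t * (-6 * deriv u0 x) ≤ t * M := mul_le_mul_of_nonneg_left hx ht
    have h2 : t * (-6 * deriv u0 x) < 1 := lt_of_le_of_lt h1 htM
    have hd : deriv F x = 1 + 6 * t * deriv u0 x := by
      have : HasDerivAt F (1 + 6 * t * deriv u0 x) x := by
        exact (hasDerivAt_id x).add (((hdiffu x).hasDerivAt).const_mul (6 * t))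
      exact this.deriv
    rw [hd]; nlinarith
  have hmono : StrictMono F :=
    strictMono_of_deriv_pos hderivpos
  refine ⟨hmono, hmono.injective, ?_⟩
  obtain ⟨C, hC⟩ := hbdd
  have hcont : Continuous F := hdiffF.continuous
  have htop : Filter.Tendsto F Filter.atTop Filter.atTop := by
    apply Filter.tendsto_atTop_mono (f := fun x : ℝ => x - 6 * t * C)
    · intro x
      have := (abs_le.mp (hC x)).1
      have h6t : 0 ≤ 6 * t := by linarith
      have : 6 * t * (-C) ≤ 6 * t * u0 x := mul_le_mul_of_nonneg_left this h6t
      simp only [F]; nlinarith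
    · exact (Filter.tendsto_atTop_add_const_right Filter.atTop (-(6*t*C)) Filter.tendsto_id).congr (fun x => by simp; ring)
  have hbot : Filter.Tendsto F Filter.atBot Filter.atBot := by
    apply Filter.tendsto_atBot_mono (f := fun x : ℝ => x + 6 * t * C)
    · intro x
      have := (abs_le.mp (hC x)).2
      have h6t : 0 ≤ 6 * t := by linarith
      have : 6 * t * u0 x ≤ 6 * t * C := mul_le_mul_of_nonneg_left this h6t
      simp only [F]; nlinarith
    · exact Filter.tendsto_atBot_add_const_right _ _ Filter.tendsto_id
  exact hcont.surjective htop hbot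
end

section
/- Let u0 : ℝ → ℝ be continuously differentiable and bounded, with bounded derivative, with 0 < M := sup_{ξ∈ℝ}(−6 u0'(ξ)) < ∞ and t_c := 1/M. For t ∈ [0, t_c) let ξ(x,t) := F_t^{-1}(x) denote the inverse of the characteristic map F_t(ξ) = ξ + 6 t u0(ξ), and set u(x,t) := u0(ξ(x,t)). Then for all (x,t) ∈ ℝ × [0,t_c), the spatial derivative of the solution is ∂_x u(x,t) = u0'(ξ(x,t)) / (1 + 6 t u0'(ξ(x,t))). -/
/-- For the Hopf solution `u(x,t) = u0(F_t⁻¹(x))` before the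
critical time, the spatial derivative is
`∂ₓ u(x,t) = u0'(ξ(x,t)) / (1 + 6 t u0'(ξ(x,t)))` where `ξ(x,t) = F_t⁻¹(x)`. -/
theorem hopf_spatial_derivative_formula
    (u0 : ℝ → ℝ) (hu0 : ContDiff ℝ 1 u0)
    (hbdd : ∃ C : ℝ, ∀ x : ℝ, |u0 x| ≤ C)
    (hbdd' : ∃ C : ℝ, ∀ x : ℝ, |deriv u0 x| ≤ C)
    (hBdd : BddAbove (Set.range fun ξ : ℝ => -6 * deriv u0 ξ))
    (M : ℝ) (hM : M = ⨆ ξ : ℝ, -6 * deriv u0 ξ) (hMpos : 0 < M)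
    (tc : ℝ) (htc : tc = 1 / M) :
    ∀ t : ℝ, 0 ≤ t → t < tc → ∀ x : ℝ,
      deriv (fun y => u0 (Function.invFun (fun ξ : ℝ => ξ + 6 * t * u0 ξ) y)) x
        = deriv u0 (Function.invFun (fun ξ : ℝ => ξ + 6 * t * u0 ξ) x)
          / (1 + 6 * t * deriv u0 (Function.invFun (fun ξ : ℝ => ξ + 6 * t * u0 ξ) x)) := by
  intro t ht0 httc x
  obtain ⟨C, hC⟩ := hbdd
  have hdiff : Differentiable ℝ u0 := hu0.differentiable one_ne_zero
  set F : ℝ → ℝ := fun ξ : ℝ => ξ + 6 * t * u0 ξ with hF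
  have htM : t * M < 1 := by
    have : t < 1 / M := htc ▸ httc
    calc t * M < (1 / M) * M := by exact mul_lt_mul_of_pos_right this hMpos
    _ = 1 := by field_simp
  have hd : ∀ ξ : ℝ, HasDerivAt F (1 + 6 * t * deriv u0 ξ) ξ := by
    intro ξ
    exact (hasDerivAt_id ξ).add (((hdiff ξ).hasDerivAt).const_mul (6 * t))
  have hpos : ∀ ξ : ℝ, 0 < 1 + 6 * t * deriv u0 ξ := by
    intro ξ
    have h1 : -6 * deriv u0 ξ ≤ M := hM ▸ le_ciSup hBdd ξ
    nlinarith
  have hmono : StrictMono F := by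
    apply strictMono_of_deriv_pos
    intro ξ
    rw [(hd ξ).deriv]
    exact hpos ξ
  have hcont : Continuous F := continuous_id.add (continuous_const.mul hu0.continuous)
  have hsurj : Function.Surjective F := by
    intro y
    have hC0 : 0 ≤ C := (abs_nonneg _).trans (hC 0)
    have ha : F (y - 6 * t * C - 1) ≤ y := by
      have := (abs_le.mp (hC (y - 6 * t * C - 1))).2
      simp only [hF]
      nlinarith [mul_le_mul_of_nonneg_left this (by positivity : (0:ℝ) ≤ 6 * t)]
    have hb : y ≤ F (y + 6 * t * C + 1) := by
      have := (abs_le.mp (hC (y + 6 * t * C + 1))).1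
      simp only [hF]
      nlinarith [mul_le_mul_of_nonneg_left this (by positivity : (0:ℝ) ≤ 6 * t)]
    have hab : y - 6 * t * C - 1 ≤ y + 6 * t * C + 1 := by nlinarith
    have := intermediate_value_Icc hab hcont.continuousOn
    obtain ⟨ξ, _, hξ⟩ := this ⟨ha, hb⟩
    exact ⟨ξ, hξ⟩
  set g : ℝ → ℝ := Function.invFun F with hg
  have hFg : ∀ y : ℝ, F (g y) = y := fun y => Function.invFun_eq (hsurj y)
  have e := StrictMono.orderIsoOfSurjective F hmono hsurj
  have hge : g = ⇑(StrictMono.orderIsoOfSurjective F hmono hsurj).symm := by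
    funext y
    apply hmono.injective
    rw [hFg y]
    exact (StrictMono.orderIsoOfSurjective_self_symm_apply F hmono hsurj y).symm
  have hgcont : Continuous g := by
    rw [hge]
    exact (OrderIso.toHomeomorph (StrictMono.orderIsoOfSurjective F hmono hsurj)).symm.continuous
  set ξ0 : ℝ := g x with hξ0
  set d : ℝ := 1 + 6 * t * deriv u0 ξ0 with hdd
  have hdne : d ≠ 0 := ne_of_gt (hpos ξ0)
  have hgderiv : HasDerivAt g d⁻¹ x :=
    HasDerivAt.of_local_left_inverse hgcont.continuousAt (hd ξ0) hdne
      (Filter.Eventually.of_forall hFg)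
  have hcomp : HasDerivAt (fun y => u0 (g y)) (deriv u0 ξ0 * d⁻¹) x :=
    ((hdiff ξ0).hasDerivAt).comp x hgderiv
  rw [hcomp.deriv, div_eq_mul_inv]
end

section
/- Let u0 : ℝ → ℝ be continuously differentiable and bounded, with bounded derivative, and suppose 0 < M := sup_{ξ∈ℝ}(−6 u0'(ξ)) < ∞; set t_c := 1/M. Then there exists a continuously differentiable function u : ℝ × [0, t_c) → ℝ solving the Hopf equation ∂_t u + 6 u ∂_x u = 0 with u(x,0) = u0(x) for all x, namely u(x,t) = u0(F_t^{-1}(x)) where F_t(ξ) = ξ + 6 t u0(ξ). -/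
open Set Filter Function

/-- Under the standard assumptions on `u0`, the Hopf equation
has a `C¹` solution on `ℝ × [0, t_c)` with initial datum `u0`, namely
`u(x,t) = u0(F_t⁻¹(x))` with `F_t(ξ) = ξ + 6 t u0(ξ)`. -/
theorem hopf_classical_solution_exists
    (u0 : ℝ → ℝ) (hu0 : ContDiff ℝ 1 u0)
    (hbdd : ∃ C : ℝ, ∀ x : ℝ, |u0 x| ≤ C)
    (hbdd' : ∃ C : ℝ, ∀ x : ℝ, |deriv u0 x| ≤ C)
    (hBdd : BddAbove (Set.range fun ξ : ℝ => -6 * deriv u0 ξ))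
    (M : ℝ) (hM : M = ⨆ ξ : ℝ, -6 * deriv u0 ξ) (hMpos : 0 < M)
    (tc : ℝ) (htc : tc = 1 / M) :
    ∃ u : ℝ → ℝ → ℝ,
      (∀ x : ℝ, ∀ t ∈ Set.Ico (0 : ℝ) tc,
        u x t = u0 (Function.invFun (fun ξ : ℝ => ξ + 6 * t * u0 ξ) x)) ∧
      ContDiffOn ℝ 1 (fun p : ℝ × ℝ => u p.1 p.2)
        ((Set.univ : Set ℝ) ×ˢ Set.Ico (0 : ℝ) tc) ∧
      (∀ x : ℝ, ∀ t ∈ Set.Ico (0 : ℝ) tc,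
        derivWithin (fun τ => u x τ) (Set.Ico (0 : ℝ) tc) t
          + 6 * u x t * deriv (fun y => u y t) x = 0) ∧
      (∀ x : ℝ, u x 0 = u0 x) := by
  classical
  obtain ⟨C, hC⟩ := hbdd
  obtain ⟨C', hC'⟩ := hbdd'
  have hC0 : 0 ≤ C := le_trans (abs_nonneg _) (hC 0)
  have hC'0 : 0 ≤ C' := le_trans (abs_nonneg _) (hC' 0)
  have htc0 : 0 < tc := by rw [htc]; positivity
  set ε : ℝ := 1 / (12 * (C' + 1)) with hεdef
  have hε : 0 < ε := by positivity
  set S : Set ℝ := Set.Ioo (-ε) tc with hSdef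
  have hIcoS : Set.Ico (0 : ℝ) tc ⊆ S := by
    intro t ht
    exact ⟨by linarith [ht.1], ht.2⟩
  have hudiff : Differentiable ℝ u0 := hu0.differentiable one_ne_zero
  -- positivity of the derivative of the characteristic map
  have hD : ∀ t ∈ S, ∀ ξ : ℝ, 0 < 1 + 6 * t * deriv u0 ξ := by
    intro t ht ξ
    rcases le_or_gt 0 t with h0 | h0
    · have h1 : -6 * deriv u0 ξ ≤ M := by
        rw [hM]; exact le_ciSup hBdd ξ
      have htcM : tc * M = 1 := by
        rw [htc]; field_simp
      have h2 : t * M < 1 := by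
        have := mul_lt_mul_of_pos_right ht.2 hMpos
        linarith
      nlinarith [mul_le_mul_of_nonneg_left h1 h0]
    · have h1 : deriv u0 ξ ≤ C' := (abs_le.mp (hC' ξ)).2
      have h2 : t * C' ≤ t * deriv u0 ξ := mul_le_mul_of_nonpos_left h1 (le_of_lt h0)
      have h3 : 0 ≤ (t + ε) * C' := mul_nonneg (by linarith [ht.1]) hC'0
      have h4 : ε * (12 * (C' + 1)) = 1 := by rw [hεdef]; field_simp
      nlinarith
  -- the derivative of the characteristic map
  have hFd : ∀ t ξ : ℝ, HasDerivAt (fun ξ : ℝ => ξ + 6 * t * u0 ξ)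
      (1 + 6 * t * deriv u0 ξ) ξ := by
    intro t ξ
    exact (hasDerivAt_id ξ).add (((hudiff ξ).hasDerivAt).const_mul (6 * t))
  have hmono : ∀ t ∈ S, StrictMono (fun ξ : ℝ => ξ + 6 * t * u0 ξ) := by
    intro t ht
    apply strictMono_of_deriv_pos
    intro ξ
    rw [(hFd t ξ).deriv]
    exact hD t ht ξ
  have hsurj : ∀ t ∈ S, Function.Surjective (fun ξ : ℝ => ξ + 6 * t * u0 ξ) := by
    intro t ht
    have hcont : Continuous (fun ξ : ℝ => ξ + 6 * t * u0 ξ) :=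
      continuous_id.add (continuous_const.mul hu0.continuous)
    set K : ℝ := 6 * (ε + tc) * C with hK
    have hb : ∀ ξ : ℝ, |6 * t * u0 ξ| ≤ K := by
      intro ξ
      have h2 : |t| ≤ ε + tc := abs_le.mpr ⟨by linarith [ht.1], by linarith [ht.2]⟩
      have h3 : |6 * t * u0 ξ| = 6 * |t| * |u0 ξ| := by
        rw [abs_mul, abs_mul]
        norm_num
      rw [h3, hK]
      have := hC ξ
      nlinarith [abs_nonneg (u0 ξ), abs_nonneg t]
    have h_top : Tendsto (fun ξ : ℝ => ξ + 6 * t * u0 ξ) atTop atTop := by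
      apply tendsto_atTop_mono (f := fun ξ : ℝ => ξ + -K)
      · intro ξ
        have := neg_abs_le (6 * t * u0 ξ)
        have := hb ξ
        linarith
      · exact tendsto_atTop_add_const_right _ (-K) tendsto_id
    have h_bot : Tendsto (fun ξ : ℝ => ξ + 6 * t * u0 ξ) atBot atBot := by
      apply tendsto_atBot_mono (f := fun ξ : ℝ => ξ + K)
      · intro ξ
        have := le_abs_self (6 * t * u0 ξ)
        have := hb ξ
        linarith
      · exact tendsto_atBot_add_const_right _ K tendsto_id
    exact hcont.surjective h_top h_bot
  have hleft : ∀ t ∈ S, Function.LeftInverse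
      (Function.invFun (fun ξ : ℝ => ξ + 6 * t * u0 ξ)) (fun ξ : ℝ => ξ + 6 * t * u0 ξ) :=
    fun t ht => Function.leftInverse_invFun (hmono t ht).injective
  have hright : ∀ t ∈ S, Function.RightInverse
      (Function.invFun (fun ξ : ℝ => ξ + 6 * t * u0 ξ)) (fun ξ : ℝ => ξ + 6 * t * u0 ξ) :=
    fun t ht => Function.rightInverse_invFun (hsurj t ht)
  -- the inverse characteristic map
  set W : ℝ × ℝ → ℝ :=
    fun p => Function.invFun (fun ξ : ℝ => ξ + 6 * p.2 * u0 ξ) p.1 with hWdef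
  have hWright : ∀ t ∈ S, ∀ x : ℝ, W (x, t) + 6 * t * u0 (W (x, t)) = x :=
    fun t ht x => hright t ht x
  have hWleft : ∀ t ∈ S, ∀ ξ : ℝ, W (ξ + 6 * t * u0 ξ, t) = ξ :=
    fun t ht ξ => hleft t ht ξ
  -- the characteristic map as a map of the plane
  set Φ : ℝ × ℝ → ℝ × ℝ := fun q => (q.1 + 6 * q.2 * u0 q.1, q.2) with hΦdef
  have hΦ : ContDiff ℝ 1 Φ :=
    ((contDiff_fst).add (((contDiff_const.mul contDiff_snd)).mul
      (hu0.comp contDiff_fst))).prodMk contDiff_snd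
  -- smoothness of the inverse map at each point of the strip
  have hW : ∀ p : ℝ × ℝ, p.2 ∈ S → ContDiffAt ℝ 1 W p := by
    rintro ⟨x, t⟩ hpS
    set ξ := W (x, t) with hξ
    set d := deriv u0 ξ with hd
    have hDq : 0 < 1 + 6 * t * d := hD t hpS ξ
    -- the derivative of Φ at (ξ, t)
    have hu0f : HasFDerivAt (fun q : ℝ × ℝ => u0 q.1)
        (d • ContinuousLinearMap.fst ℝ ℝ ℝ) (ξ, t) :=
      HasDerivAt.comp_hasFDerivAt _ ((hudiff ξ).hasDerivAt) hasFDerivAt_fst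
    have hc6 : HasFDerivAt (fun q : ℝ × ℝ => 6 * q.2)
        ((6 : ℝ) • ContinuousLinearMap.snd ℝ ℝ ℝ) (ξ, t) :=
      (hasFDerivAt_snd).const_mul 6
    have hmul : HasFDerivAt (fun q : ℝ × ℝ => 6 * q.2 * u0 q.1)
        ((6 * t) • (d • ContinuousLinearMap.fst ℝ ℝ ℝ)
          + (u0 ξ) • ((6 : ℝ) • ContinuousLinearMap.snd ℝ ℝ ℝ)) (ξ, t) := hc6.mul hu0f
    set L : ℝ × ℝ →L[ℝ] ℝ × ℝ :=
      (ContinuousLinearMap.fst ℝ ℝ ℝ + ((6 * t) • (d • ContinuousLinearMap.fst ℝ ℝ ℝ)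
        + (u0 ξ) • ((6 : ℝ) • ContinuousLinearMap.snd ℝ ℝ ℝ))).prod
        (ContinuousLinearMap.snd ℝ ℝ ℝ) with hLdef
    have hL : HasFDerivAt Φ L (ξ, t) := (hasFDerivAt_fst.add hmul).prodMk hasFDerivAt_snd
    have hLv : ∀ v : ℝ × ℝ, L v = (v.1 + (6 * t * (d * v.1) + u0 ξ * (6 * v.2)), v.2) := by
      intro v
      simp [hLdef, smul_eq_mul]
    have hbij : Function.Bijective L := by
      constructor
      · intro v w hvw
        rw [hLv v, hLv w, Prod.ext_iff] at hvw
        obtain ⟨h1, h2⟩ := hvw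
        simp only at h1 h2
        have key : (v.1 - w.1) * (1 + 6 * t * d) = 0 := by
          rw [h2] at h1
          linear_combination h1
        have hv1 : v.1 = w.1 := by
          rcases mul_eq_zero.mp key with h | h
          · linarith
          · linarith
        exact Prod.ext hv1 h2
      · intro w
        refine ⟨((w.1 - 6 * u0 ξ * w.2) / (1 + 6 * t * d), w.2), ?_⟩
        rw [hLv]
        refine Prod.ext ?_ rfl
        simp only
        field_simp
        ring
    set e : (ℝ × ℝ) ≃L[ℝ] (ℝ × ℝ) :=
      LinearEquiv.toContinuousLinearEquiv
        (LinearEquiv.ofBijective (L : ℝ × ℝ →ₗ[ℝ] ℝ × ℝ) hbij) with hedef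
    have he : (e : (ℝ × ℝ) →L[ℝ] (ℝ × ℝ)) = L := by
      apply ContinuousLinearMap.ext
      intro v
      rfl
    have hFe : HasFDerivAt Φ ((e : (ℝ × ℝ) ≃L[ℝ] (ℝ × ℝ)) : (ℝ × ℝ) →L[ℝ] (ℝ × ℝ)) (ξ, t) := by
      rw [he]; exact hL
    have hΦq : Φ (ξ, t) = (x, t) := by
      rw [hΦdef]
      exact Prod.ext (hWright t hpS x) rfl
    have hS' : HasStrictFDerivAt Φ
        ((e : (ℝ × ℝ) ≃L[ℝ] (ℝ × ℝ)) : (ℝ × ℝ) →L[ℝ] (ℝ × ℝ)) (ξ, t) :=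
      (hΦ.contDiffAt).hasStrictFDerivAt' hFe one_ne_zero
    have hcd : ContDiffAt ℝ 1 ((hΦ.contDiffAt).localInverse hFe one_ne_zero) (Φ (ξ, t)) :=
      ContDiffAt.to_localInverse _ _ one_ne_zero
    have hg : ∀ᶠ r in nhds (ξ, t), (fun p : ℝ × ℝ => (W p, p.2)) (Φ r) = r := by
      have hev : ∀ᶠ r : ℝ × ℝ in nhds (ξ, t), r.2 ∈ S := by
        have : S ∈ nhds t := isOpen_Ioo.mem_nhds hpS
        exact continuous_snd.continuousAt.preimage_mem_nhds this
      filter_upwards [hev] with r hr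
      exact Prod.ext (hWleft r.2 hr r.1) rfl
    have huniq := hS'.localInverse_unique (g := fun p : ℝ × ℝ => (W p, p.2)) hg
    have hΨ : ContDiffAt ℝ 1 (fun p : ℝ × ℝ => (W p, p.2)) (x, t) := by
      rw [← hΦq]
      exact hcd.congr_of_eventuallyEq huniq
    exact hΨ.fst
  -- the solution
  refine ⟨fun x t => u0 (W (x, t)), fun x t ht => rfl, ?_, ?_, ?_⟩
  · -- regularity
    show ContDiffOn ℝ 1 (fun p : ℝ × ℝ => u0 (W (p.1, p.2)))
      ((Set.univ : Set ℝ) ×ˢ Set.Ico (0 : ℝ) tc)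
    intro p hp
    have hpS : p.2 ∈ S := hIcoS hp.2
    have : ContDiffAt ℝ 1 (fun p : ℝ × ℝ => u0 (W p)) p :=
      (hu0.contDiffAt).comp p (hW p hpS)
    exact this.contDiffWithinAt
  · -- the PDE
    intro x t ht
    have htS : t ∈ S := hIcoS ht
    set ξ := W (x, t) with hξ
    set d := deriv u0 ξ with hd
    have hdiffW : DifferentiableAt ℝ W (x, t) := (hW (x, t) htS).differentiableAt one_ne_zero
    -- x-direction
    have hVx : DifferentiableAt ℝ (fun y : ℝ => W (y, t)) x :=
      hdiffW.comp (g := W) x (differentiableAt_id.prodMk (differentiableAt_const t) :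
        DifferentiableAt ℝ (fun y : ℝ => (y, t)) x)
    set A := deriv (fun y : ℝ => W (y, t)) x with hA
    have hAx : HasDerivAt (fun y : ℝ => W (y, t)) A x := hVx.hasDerivAt
    have hux : HasDerivAt (fun y : ℝ => u0 (W (y, t))) (d * A) x :=
      (hudiff ξ).hasDerivAt.comp x hAx
    have hFx : HasDerivAt (fun y : ℝ => W (y, t) + 6 * t * u0 (W (y, t)))
        (A + 6 * t * (d * A)) x := hAx.add (hux.const_mul (6 * t))
    have hFxid : (fun y : ℝ => W (y, t) + 6 * t * u0 (W (y, t))) = fun y : ℝ => y := by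
      funext y
      exact hWright t htS y
    have eA : A + 6 * t * (d * A) = 1 := by
      rw [hFxid] at hFx
      exact hFx.unique (hasDerivAt_id x)
    -- t-direction
    have hVt : DifferentiableAt ℝ (fun τ : ℝ => W (x, τ)) t :=
      hdiffW.comp t ((differentiableAt_const x).prodMk differentiableAt_id :
        DifferentiableAt ℝ (fun τ : ℝ => (x, τ)) t)
    set B := deriv (fun τ : ℝ => W (x, τ)) t with hB
    have hBt : HasDerivAt (fun τ : ℝ => W (x, τ)) B t := hVt.hasDerivAt
    have hut : HasDerivAt (fun τ : ℝ => u0 (W (x, τ))) (d * B) t :=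
      (hudiff ξ).hasDerivAt.comp t hBt
    have h6τ : HasDerivAt (fun τ : ℝ => 6 * τ) 6 t := by
      simpa using (hasDerivAt_id t).const_mul (6 : ℝ)
    have hmulT : HasDerivAt (fun τ : ℝ => 6 * τ * u0 (W (x, τ)))
        (6 * u0 ξ + 6 * t * (d * B)) t := by
      have := h6τ.mul hut
      exact this
    have hconstT : HasDerivAt (fun τ : ℝ => W (x, τ) + 6 * τ * u0 (W (x, τ))) 0 t := by
      have hev : (fun τ : ℝ => W (x, τ) + 6 * τ * u0 (W (x, τ))) =ᶠ[nhds t]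
          fun _ => x := by
        have hSn : S ∈ nhds t := isOpen_Ioo.mem_nhds htS
        filter_upwards [hSn] with τ hτ
        exact hWright τ hτ x
      exact (hasDerivAt_const t x).congr_of_eventuallyEq hev
    have eB : B + (6 * u0 ξ + 6 * t * (d * B)) = 0 := (hBt.add hmulT).unique hconstT
    have hDq : 0 < 1 + 6 * t * d := hD t htS ξ
    have key : B + 6 * u0 ξ * A = 0 := by
      have h0 : (B + 6 * u0 ξ * A) * (1 + 6 * t * d) = 0 := by
        linear_combination eB + (6 * u0 ξ) * eA
      rcases mul_eq_zero.mp h0 with h | h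
      · exact h
      · linarith
    show derivWithin (fun τ : ℝ => u0 (W (x, τ))) (Set.Ico (0 : ℝ) tc) t
      + 6 * u0 (W (x, t)) * deriv (fun y : ℝ => u0 (W (y, t))) x = 0
    rw [hut.differentiableAt.derivWithin (uniqueDiffOn_Ico 0 tc t ht), hut.deriv, hux.deriv]
    linear_combination d * key
  · -- initial condition
    intro x
    show u0 (W (x, 0)) = u0 x
    have h0 : (fun ξ : ℝ => ξ + 6 * (0 : ℝ) * u0 ξ) = fun ξ : ℝ => ξ := by
      funext ξ; ring
    have : W (x, 0) = Function.invFun (fun ξ : ℝ => ξ) x := by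
      rw [hWdef]
      simp only
      rw [h0]
    rw [this]
    exact congrArg u0 (Function.leftInverse_invFun (fun _ _ h => h) x)
end

section
/- Let u0 : ℝ → ℝ be continuously differentiable and bounded, with bounded derivative, and suppose M := sup_{ξ∈ℝ}(−6 u0'(ξ)) is positive, finite, and attained at some ξ* ∈ ℝ; set t_c := 1/M and let u(x,t) = u0(F_t^{-1}(x)) be the classical solution on [0, t_c). Then along the characteristic through ξ*, for every t ∈ [0,t_c), ∂_x u(ξ* + 6 t u0(ξ*), t) = u0'(ξ*) / (1 − t/t_c), and consequently ∂_x u(ξ* + 6 t u0(ξ*), t) → −∞ as t → t_c from below, while sup_{x∈ℝ} |u(x,t)| remains bounded by sup |u0| for all t < t_c. -/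
open Filter Function

/-- Along the characteristic through the point `ξ*` where
`−6 u0'` attains its supremum `M = 1/t_c`, the spatial derivative of the Hopf
solution equals `u0'(ξ*)/(1 − t/t_c)`, blows up to `−∞` as `t → t_c⁻`, while
the solution itself stays bounded by `sup |u0|`. -/
theorem hopf_derivative_blowup_along_characteristic
    (u0 : ℝ → ℝ) (hu0 : ContDiff ℝ 1 u0)
    (hbdd : ∃ C : ℝ, ∀ x : ℝ, |u0 x| ≤ C)
    (hbdd' : ∃ C : ℝ, ∀ x : ℝ, |deriv u0 x| ≤ C)
    (hBdd : BddAbove (Set.range fun ξ : ℝ => -6 * deriv u0 ξ))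
    (M : ℝ) (hM : M = ⨆ ξ : ℝ, -6 * deriv u0 ξ) (hMpos : 0 < M)
    (ξs : ℝ) (hattain : -6 * deriv u0 ξs = M)
    (tc : ℝ) (htc : tc = 1 / M) :
    (∀ t : ℝ, 0 ≤ t → t < tc →
      deriv (fun y => u0 (Function.invFun (fun ξ : ℝ => ξ + 6 * t * u0 ξ) y))
          (ξs + 6 * t * u0 ξs)
        = deriv u0 ξs / (1 - t / tc)) ∧
    Filter.Tendsto
      (fun t : ℝ =>
        deriv (fun y => u0 (Function.invFun (fun ξ : ℝ => ξ + 6 * t * u0 ξ) y))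
          (ξs + 6 * t * u0 ξs))
      (nhdsWithin tc (Set.Iio tc)) Filter.atBot ∧
    (∀ t : ℝ, 0 ≤ t → t < tc → ∀ x : ℝ,
      |u0 (Function.invFun (fun ξ : ℝ => ξ + 6 * t * u0 ξ) x)| ≤ ⨆ y : ℝ, |u0 y|) := by
  obtain ⟨C, hC⟩ := hbdd
  have hdiff : Differentiable ℝ u0 := hu0.differentiable one_ne_zero
  have hle : ∀ ξ : ℝ, -6 * deriv u0 ξ ≤ M := by
    intro ξ; rw [hM]; exact le_ciSup hBdd ξ
  have hMne : M ≠ 0 := ne_of_gt hMpos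
  have htcpos : 0 < tc := by rw [htc]; positivity
  have htcne : tc ≠ 0 := ne_of_gt htcpos
  have hd : deriv u0 ξs = -(M / 6) := by linarith
  -- Part 1
  have key : ∀ t : ℝ, 0 ≤ t → t < tc →
      deriv (fun y => u0 (Function.invFun (fun ξ : ℝ => ξ + 6 * t * u0 ξ) y))
          (ξs + 6 * t * u0 ξs)
        = deriv u0 ξs / (1 - t / tc) := by
    intro t ht htlt
    set F : ℝ → ℝ := fun ξ => ξ + 6 * t * u0 ξ with hF
    have htM : t * M < 1 := by
      have h1 : t < 1 / M := htc ▸ htlt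
      calc t * M < (1 / M) * M := by exact mul_lt_mul_of_pos_right h1 hMpos
        _ = 1 := by field_simp
    have hFd : ∀ ξ : ℝ, HasDerivAt F (1 + 6 * t * deriv u0 ξ) ξ := fun ξ =>
      (hasDerivAt_id ξ).add (((hdiff ξ).hasDerivAt).const_mul (6 * t))
    have hpos : ∀ ξ : ℝ, 0 < 1 + 6 * t * deriv u0 ξ := by
      intro ξ
      have h1 := hle ξ
      nlinarith [mul_le_mul_of_nonneg_left h1 ht]
    have hmono : StrictMono F :=
      strictMono_of_deriv_pos fun ξ => by rw [(hFd ξ).deriv]; exact hpos ξ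
    have hinj : Function.Injective F := hmono.injective
    have hcontF : Continuous F := continuous_id.add (continuous_const.mul hu0.continuous)
    have hbd : ∀ ξ : ℝ, ξ - 6 * t * C ≤ F ξ ∧ F ξ ≤ ξ + 6 * t * C := by
      intro ξ
      have h1 := abs_le.1 (hC ξ)
      have h2 : 0 ≤ 6 * t := by linarith
      constructor <;> simp only [hF] <;> nlinarith
    have hsurj : Function.Surjective F := by
      apply hcontF.surjective
      · exact tendsto_atTop_mono (fun ξ => (hbd ξ).1)
          (tendsto_atTop_add_const_right _ _ tendsto_id)
      · exact tendsto_atBot_mono (fun ξ => (hbd ξ).2)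
          (tendsto_atBot_add_const_right _ _ tendsto_id)
    have hinv_eq : Function.invFun F = ⇑(StrictMono.orderIsoOfSurjective F hmono hsurj).symm := by
      funext y
      apply hinj
      rw [Function.invFun_eq (hsurj y)]
      exact (StrictMono.orderIsoOfSurjective_self_symm_apply F hmono hsurj y).symm
    have hcontinv : ContinuousAt (Function.invFun F) (F ξs) := by
      rw [hinv_eq]
      exact ((StrictMono.orderIsoOfSurjective F hmono hsurj).symm.continuous).continuousAt
    have hgF : Function.invFun F (F ξs) = ξs := Function.leftInverse_invFun hinj ξs
    have hinvF : HasDerivAt (Function.invFun F) (1 + 6 * t * deriv u0 ξs)⁻¹ (F ξs) := by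
      refine HasDerivAt.of_local_left_inverse (f := F) hcontinv ?_ (ne_of_gt (hpos ξs)) ?_
      · rw [hgF]; exact hFd ξs
      · exact Filter.Eventually.of_forall fun y => Function.invFun_eq (hsurj y)
    have hcomp : HasDerivAt (fun y => u0 (Function.invFun F y))
        (deriv u0 ξs * (1 + 6 * t * deriv u0 ξs)⁻¹) (F ξs) := by
      have hu : HasDerivAt u0 (deriv u0 ξs) (Function.invFun F (F ξs)) := by
        rw [hgF]; exact (hdiff ξs).hasDerivAt
      exact HasDerivAt.comp (F ξs) hu hinvF
    have hx : ξs + 6 * t * u0 ξs = F ξs := rfl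
    have harg : 1 + 6 * t * deriv u0 ξs = 1 - t / tc := by
      have h2 : t / tc = t * M := by rw [htc]; field_simp
      rw [hd, h2]; ring
    rw [hx, hcomp.deriv, harg]
    exact (div_eq_mul_inv _ _).symm
  refine ⟨key, ?_, ?_⟩
  · -- blow-up
    have hdneg : deriv u0 ξs < 0 := by rw [hd]; linarith
    have hev : ∀ᶠ t in nhdsWithin tc (Set.Iio tc),
        deriv u0 ξs / (1 - t / tc) =
        deriv (fun y => u0 (Function.invFun (fun ξ : ℝ => ξ + 6 * t * u0 ξ) y))
          (ξs + 6 * t * u0 ξs) := by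
      filter_upwards [Filter.Eventually.filter_mono nhdsWithin_le_nhds
        (eventually_gt_nhds htcpos), self_mem_nhdsWithin] with t ht0 htlt
      exact (key t ht0.le htlt).symm
    have h0 : Tendsto (fun t : ℝ => 1 - t / tc) (nhdsWithin tc (Set.Iio tc))
        (nhdsWithin 0 (Set.Ioi 0)) := by
      apply tendsto_nhdsWithin_of_tendsto_nhds_of_eventually_within
      · have : Tendsto (fun t : ℝ => 1 - t / tc) (nhds tc) (nhds (1 - tc / tc)) :=
          tendsto_const_nhds.sub (tendsto_id.div_const tc)
        rw [div_self htcne, sub_self] at this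
        exact this.mono_left nhdsWithin_le_nhds
      · filter_upwards [self_mem_nhdsWithin] with t ht
        exact sub_pos.2 ((div_lt_one htcpos).2 ht)
    have hinv : Tendsto (fun t : ℝ => (1 - t / tc)⁻¹) (nhdsWithin tc (Set.Iio tc))
        atTop := tendsto_inv_nhdsGT_zero.comp h0
    have := Tendsto.const_mul_atTop_of_neg hdneg hinv
    refine Tendsto.congr' ?_ this
    filter_upwards [hev] with t ht
    rw [← ht]
    exact (div_eq_mul_inv _ _).symm
  · -- boundedness
    intro t _ _ x
    exact le_ciSup ⟨C, by rintro _ ⟨y, rfl⟩; exact hC y⟩ _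
end

section
/- Let u0 : ℝ → ℝ be three times continuously differentiable, let ξ_c ∈ ℝ be a point with u0'(ξ_c) < 0 at which −u0' attains a local maximum (so that u0''(ξ_c) = 0), and set t_c := −1/(6 u0'(ξ_c)) and x_c := F_{t_c}(ξ_c), where F_t(ξ) = ξ + 6 t u0(ξ). Then the characteristic map at the critical time is cubically degenerate at ξ_c: F_{t_c}'(ξ_c) = 0, F_{t_c}''(ξ_c) = 0, and F_{t_c}(ξ) = x_c + t_c u0'''(ξ_c) (ξ − ξ_c)³ + o((ξ − ξ_c)³) as ξ → ξ_c. -/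
open Asymptotics

/-- MVT step: if `g a = 0` and `deriv g = o((x-a)^k)`, then `g = o((x-a)^(k+1))`. -/
lemma hopf_aux_step {g : ℝ → ℝ} {a : ℝ} {k : ℕ}
    (hg : Differentiable ℝ g) (h0 : g a = 0)
    (hd : (deriv g) =o[nhds a] fun x => (x - a) ^ k) :
    g =o[nhds a] fun x => (x - a) ^ (k + 1) := by
  rw [isLittleO_iff] at hd ⊢
  intro ε hε
  have hd' := hd hε
  rw [Metric.eventually_nhds_iff] at hd' ⊢
  obtain ⟨δ, hδ, H⟩ := hd'
  refine ⟨δ, hδ, fun x hx => ?_⟩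
  have hseg : ∀ y ∈ Set.uIcc a x, |y - a| ≤ |x - a| := by
    intro y hy
    rcases le_total a x with h | h
    · rw [Set.uIcc_of_le h] at hy
      rw [abs_of_nonneg (by linarith [hy.1, hy.2] : (0:ℝ) ≤ y - a),
        abs_of_nonneg (by linarith : (0:ℝ) ≤ x - a)]
      linarith [hy.2]
    · rw [Set.uIcc_of_ge h] at hy
      rw [abs_of_nonpos (by linarith [hy.1, hy.2] : y - a ≤ 0),
        abs_of_nonpos (by linarith : x - a ≤ 0)]
      linarith [hy.1]
  have bound : ∀ y ∈ Set.uIcc a x, ‖deriv g y‖ ≤ ε * |x - a| ^ k := by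
    intro y hy
    have hyδ : dist y a < δ := by
      rw [Real.dist_eq]
      exact lt_of_le_of_lt (hseg y hy) (by rwa [Real.dist_eq] at hx)
    have := H hyδ
    calc ‖deriv g y‖ ≤ ε * ‖(y - a) ^ k‖ := this
      _ = ε * |y - a| ^ k := by rw [norm_pow]; rfl
      _ ≤ ε * |x - a| ^ k :=
          mul_le_mul_of_nonneg_left (pow_le_pow_left₀ (abs_nonneg _) (hseg y hy) k) hε.le
  have key := (convex_uIcc a x).norm_image_sub_le_of_norm_deriv_le
    (fun y _ => hg y) bound Set.left_mem_uIcc Set.right_mem_uIcc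
  rw [h0, sub_zero] at key
  calc ‖g x‖ ≤ ε * |x - a| ^ k * ‖x - a‖ := key
    _ = ε * ‖(x - a) ^ (k + 1)‖ := by
        rw [norm_pow]
        show ε * |x - a| ^ k * |x - a| = ε * |x - a| ^ (k + 1)
        ring


/-- If `−u0'` has a local maximum at `ξ_c` with
`u0'(ξ_c) < 0`, then at the critical time `t_c = −1/(6 u0'(ξ_c))` the
characteristic map `F_{t_c}(ξ) = ξ + 6 t_c u0(ξ)` is cubically degenerate at
`ξ_c`: `F'(ξ_c) = 0`, `F''(ξ_c) = 0` and
`F(ξ) = x_c + t_c u0'''(ξ_c)(ξ−ξ_c)³ + o((ξ−ξ_c)³)`. -/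
theorem hopf_characteristic_cubic_degeneracy
    (u0 : ℝ → ℝ) (hu0 : ContDiff ℝ 3 u0)
    (ξc : ℝ) (hneg : deriv u0 ξc < 0)
    (hmax : IsLocalMax (fun ξ : ℝ => -deriv u0 ξ) ξc)
    (tc xc : ℝ) (htc : tc = -1 / (6 * deriv u0 ξc))
    (hxc : xc = ξc + 6 * tc * u0 ξc) :
    deriv (fun ξ : ℝ => ξ + 6 * tc * u0 ξ) ξc = 0 ∧
    deriv (deriv (fun ξ : ℝ => ξ + 6 * tc * u0 ξ)) ξc = 0 ∧
    (fun ξ : ℝ => (ξ + 6 * tc * u0 ξ) - xc - tc * iteratedDeriv 3 u0 ξc * (ξ - ξc) ^ 3)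
      =o[nhds ξc] (fun ξ : ℝ => (ξ - ξc) ^ 3) := by
  -- basic differentiability
  have hu03 : ContDiff ℝ ((2:ℕ) + 1) u0 := by exact_mod_cast hu0
  have hu0' : Differentiable ℝ u0 := hu03.differentiable (by norm_num)
  have hd1C : ContDiff ℝ ((1:ℕ) + 1) (deriv u0) := by
    have := (contDiff_succ_iff_deriv.mp hu03).2.2
    exact_mod_cast this
  have hd1 : Differentiable ℝ (deriv u0) := hd1C.differentiable (by norm_num)
  have hd2C : ContDiff ℝ (1:ℕ) (deriv (deriv u0)) := by
    have := (contDiff_succ_iff_deriv.mp hd1C).2.2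
    exact_mod_cast this
  have hd2 : Differentiable ℝ (deriv (deriv u0)) := hd2C.differentiable (by norm_num)
  -- key algebraic facts
  have hne : deriv u0 ξc ≠ 0 := ne_of_lt hneg
  have key1 : 6 * tc * deriv u0 ξc = -1 := by
    rw [htc]; field_simp
  have key2 : deriv (deriv u0) ξc = 0 := by
    have := hmax.deriv_eq_zero
    rw [deriv.fun_neg] at this
    linarith
  set c : ℝ := tc * iteratedDeriv 3 u0 ξc with hc
  have key3 : c = tc * deriv (deriv (deriv u0)) ξc := by
    rw [hc]
    congr 1
    simp [iteratedDeriv_succ, iteratedDeriv_zero]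
  -- derivative of F
  have hF : ∀ ξ : ℝ, HasDerivAt (fun ξ : ℝ => ξ + 6 * tc * u0 ξ)
      (1 + 6 * tc * deriv u0 ξ) ξ := fun ξ =>
    (hasDerivAt_id ξ).add (((hu0' ξ).hasDerivAt).const_mul (6 * tc))
  have hFderiv : deriv (fun ξ : ℝ => ξ + 6 * tc * u0 ξ)
      = fun ξ : ℝ => 1 + 6 * tc * deriv u0 ξ := funext fun ξ => (hF ξ).deriv
  have goal1 : deriv (fun ξ : ℝ => ξ + 6 * tc * u0 ξ) ξc = 0 := by
    rw [hFderiv]; simp only []; linarith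
  have hF2 : ∀ ξ : ℝ, HasDerivAt (fun ξ : ℝ => 1 + 6 * tc * deriv u0 ξ)
      (6 * tc * deriv (deriv u0) ξ) ξ := fun ξ => by
    exact (((hd1 ξ).hasDerivAt).const_mul (6 * tc)).const_add 1
  have goal2 : deriv (deriv (fun ξ : ℝ => ξ + 6 * tc * u0 ξ)) ξc = 0 := by
    rw [hFderiv, (hF2 ξc).deriv, key2]; ring
  refine ⟨goal1, goal2, ?_⟩
  -- the function g
  set g : ℝ → ℝ := fun ξ => (ξ + 6 * tc * u0 ξ) - xc - c * (ξ - ξc) ^ 3 with hgdef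
  -- first derivative of g
  have hg1 : ∀ ξ : ℝ, HasDerivAt g
      (1 + 6 * tc * deriv u0 ξ - c * (3 * (ξ - ξc) ^ 2)) ξ := by
    intro ξ
    have hcube : HasDerivAt (fun ξ : ℝ => c * (ξ - ξc) ^ 3) (c * (3 * (ξ - ξc) ^ 2)) ξ := by
      simpa using (((hasDerivAt_id ξ).sub_const ξc).pow 3).const_mul c
    exact ((hF ξ).sub_const xc).sub hcube
  have hgderiv : deriv g = fun ξ : ℝ => 1 + 6 * tc * deriv u0 ξ - c * (3 * (ξ - ξc) ^ 2) :=
    funext fun ξ => (hg1 ξ).deriv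
  have hgdiff : Differentiable ℝ g := fun ξ => (hg1 ξ).differentiableAt
  -- second derivative
  have hg2 : ∀ ξ : ℝ, HasDerivAt (deriv g)
      (6 * tc * deriv (deriv u0) ξ - c * (3 * (2 * (ξ - ξc)))) ξ := by
    intro ξ
    rw [hgderiv]
    have h1 : HasDerivAt (fun ξ : ℝ => c * (3 * (ξ - ξc) ^ 2)) (c * (3 * (2 * (ξ - ξc)))) ξ := by
      have := ((((hasDerivAt_id ξ).sub_const ξc).pow 2).const_mul 3).const_mul c
      simpa using this
    exact (hF2 ξ).sub h1
  have hgderiv2 : deriv (deriv g)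
      = fun ξ : ℝ => 6 * tc * deriv (deriv u0) ξ - c * (3 * (2 * (ξ - ξc))) :=
    funext fun ξ => (hg2 ξ).deriv
  have hgdiff1 : Differentiable ℝ (deriv g) := fun ξ => (hg2 ξ).differentiableAt
  -- third derivative at ξc is zero
  have hg3 : HasDerivAt (deriv (deriv g)) 0 ξc := by
    rw [hgderiv2]
    have h1 : HasDerivAt (fun ξ : ℝ => 6 * tc * deriv (deriv u0) ξ)
        (6 * tc * deriv (deriv (deriv u0)) ξc) ξc :=
      ((hd2 ξc).hasDerivAt).const_mul (6 * tc)
    have h2 : HasDerivAt (fun ξ : ℝ => c * (3 * (2 * (ξ - ξc)))) (c * 6) ξc := by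
      have h := ((hasDerivAt_id ξc).sub_const ξc).const_mul ((6:ℝ) * c)
      have heq : (fun ξ : ℝ => c * (3 * (2 * (ξ - ξc)))) = fun y : ℝ => (6 * c) * (y - ξc) := by
        funext y; ring
      rw [heq]
      rw [show c * 6 = 6 * c * 1 by ring]
      exact h
    have h3 := h1.sub h2
    have : 6 * tc * deriv (deriv (deriv u0)) ξc - c * 6 = 0 := by rw [key3]; ring
    rw [this] at h3
    exact h3
  -- little-o chain
  have h0'' : deriv (deriv g) ξc = 0 := by
    have := (hg2 ξc).deriv
    rw [this, key2]; ring
  have o1 : (deriv (deriv g)) =o[nhds ξc] fun x => (x - ξc) ^ 1 := by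
    have h := hasDerivAt_iff_isLittleO.mp hg3
    simp only [smul_zero, sub_zero, h0''] at h
    simpa [pow_one] using h
  have h0' : deriv g ξc = 0 := by
    have := (hg1 ξc).deriv
    rw [this]; nlinarith [key1]
  have h0g : g ξc = 0 := by
    rw [hgdef]; simp only [hxc]; ring
  have o2 := hopf_aux_step hgdiff1 h0' o1
  have o3 := hopf_aux_step hgdiff h0g o2
  norm_num at o3
  exact o3
end

section
/- Let u0 : ℝ → ℝ be three times continuously differentiable and bounded, with bounded derivative, suppose M := sup_{ξ∈ℝ}(−6 u0'(ξ)) is positive, finite, and attained exactly at ξ_c ∈ ℝ, with u0'''(ξ_c) > 0, and set t_c := 1/M, x_c := ξ_c + 6 t_c u0(ξ_c) and u_c := u0(ξ_c). Assume the characteristic map F_{t_c}(ξ) = ξ + 6 t_c u0(ξ) is a homeomorphism of ℝ and let u(x, t_c) := u0(F_{t_c}^{-1}(x)) be the Hopf solution at the critical time. Then the solution has a cube-root singularity at x_c: lim_{x→x_c} (u(x,t_c) − u_c)³ / (x − x_c) = −1 / (216 t_c⁴ u0'''(ξ_c)). -/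
open Filter Topology

/-- If `f`, `f1 = f'`, `f2 = f''` vanish at `a` and `f2` has derivative `A` at `a`,
then `f x / (x-a)^3 → A/6` as `x → a`. -/
lemma hopf_cube_limit_aux (f f1 f2 : ℝ → ℝ) (a A : ℝ)
    (h1 : ∀ x, HasDerivAt f (f1 x) x)
    (h2 : ∀ x, HasDerivAt f1 (f2 x) x)
    (h3 : HasDerivAt f2 A a)
    (hf0 : f a = 0) (hf10 : f1 a = 0) (hf20 : f2 a = 0) :
    Filter.Tendsto (fun x => f x / (x - a) ^ 3) (𝓝[≠] a) (𝓝 (A / 6)) := by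
  have hsub : ∀ x : ℝ, HasDerivAt (fun y : ℝ => y - a) 1 x := fun x =>
    (hasDerivAt_id x).sub_const a
  have hstep3 : Tendsto (fun x => f2 x / (6 * (x - a))) (𝓝[≠] a) (𝓝 (A / 6)) := by
    have hs := hasDerivAt_iff_tendsto_slope.mp h3
    have h6 : Tendsto (fun x => (1 / 6 : ℝ) * slope f2 a x) (𝓝[≠] a) (𝓝 ((1 / 6) * A)) :=
      hs.const_mul _
    have heq : ∀ x : ℝ, (1 / 6 : ℝ) * slope f2 a x = f2 x / (6 * (x - a)) := by
      intro x
      rw [slope_def_field, hf20, sub_zero, one_div, inv_mul_eq_div, mul_comm (6:ℝ), ← div_div]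
    have hval : (1 / 6 : ℝ) * A = A / 6 := by ring
    rw [hval] at h6
    exact h6.congr heq
  have hstep2 : Tendsto (fun x => f1 x / (3 * (x - a) ^ 2)) (𝓝[≠] a) (𝓝 (A / 6)) := by
    apply HasDerivAt.lhopital_zero_nhdsNE (f' := f2) (g' := fun x => 6 * (x - a))
    · exact Eventually.of_forall h2
    · refine Eventually.of_forall fun x => ?_
      have h := ((hsub x).pow 2).const_mul (3 : ℝ)
      refine h.congr_deriv ?_
      push_cast
      ring
    · filter_upwards [self_mem_nhdsWithin] with x hx
      have hxa : x - a ≠ 0 := sub_ne_zero.mpr hx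
      exact mul_ne_zero (by norm_num) hxa
    · have hc : Tendsto f1 (𝓝 a) (𝓝 (f1 a)) := (h2 a).continuousAt
      rw [hf10] at hc
      exact hc.mono_left nhdsWithin_le_nhds
    · have hc : Tendsto (fun x : ℝ => 3 * (x - a) ^ 2) (𝓝 a) (𝓝 (3 * (a - a) ^ 2)) :=
        (Continuous.tendsto (by continuity) a)
      simp only [sub_self] at hc
      norm_num at hc
      exact hc.mono_left nhdsWithin_le_nhds
    · exact hstep3
  apply HasDerivAt.lhopital_zero_nhdsNE (f' := f1) (g' := fun x => 3 * (x - a) ^ 2)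
  · exact Eventually.of_forall h1
  · refine Eventually.of_forall fun x => ?_
    have h := (hsub x).pow 3
    refine h.congr_deriv ?_
    push_cast
    ring
  · filter_upwards [self_mem_nhdsWithin] with x hx
    have hxa : x - a ≠ 0 := sub_ne_zero.mpr hx
    positivity
  · have hc : Tendsto f (𝓝 a) (𝓝 (f a)) := (h1 a).continuousAt
    rw [hf0] at hc
    exact hc.mono_left nhdsWithin_le_nhds
  · have hc : Tendsto (fun x : ℝ => (x - a) ^ 3) (𝓝 a) (𝓝 ((a - a) ^ 3)) :=
      (Continuous.tendsto (by continuity) a)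
    simp only [sub_self] at hc
    norm_num at hc
    exact hc.mono_left nhdsWithin_le_nhds
  · exact hstep2

/-- If `−6 u0'` attains its supremum `M > 0` exactly at
`ξ_c`, with `u0'''(ξ_c) > 0`, and the characteristic map at the critical time
`t_c = 1/M` is a homeomorphism of `ℝ`, then the Hopf solution at the critical
time has a cube-root singularity at `x_c`:
`lim_{x→x_c} (u(x,t_c) − u_c)³/(x − x_c) = −1/(216 t_c⁴ u0'''(ξ_c))`. -/
theorem hopf_cube_root_singularity
    (u0 : ℝ → ℝ) (hu0 : ContDiff ℝ 3 u0)
    (hbdd : ∃ C : ℝ, ∀ x : ℝ, |u0 x| ≤ C)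
    (hbdd' : ∃ C : ℝ, ∀ x : ℝ, |deriv u0 x| ≤ C)
    (ξc : ℝ) (M : ℝ) (hMdef : M = -6 * deriv u0 ξc) (hMpos : 0 < M)
    (hstrict : ∀ ξ : ℝ, ξ ≠ ξc → -6 * deriv u0 ξ < M)
    (h3 : 0 < iteratedDeriv 3 u0 ξc)
    (tc xc uc : ℝ) (htc : tc = 1 / M)
    (hxc : xc = ξc + 6 * tc * u0 ξc) (huc : uc = u0 ξc)
    (hbij : Function.Bijective (fun ξ : ℝ => ξ + 6 * tc * u0 ξ))
    (hcinv : Continuous (Function.invFun (fun ξ : ℝ => ξ + 6 * tc * u0 ξ))) :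
    Filter.Tendsto
      (fun x : ℝ =>
        (u0 (Function.invFun (fun ξ : ℝ => ξ + 6 * tc * u0 ξ) x) - uc) ^ 3 / (x - xc))
      (nhdsWithin xc {xc}ᶜ)
      (nhds (-1 / (216 * tc ^ 4 * iteratedDeriv 3 u0 ξc))) := by
  obtain ⟨hFinj, hFsurj⟩ := hbij
  set F : ℝ → ℝ := fun ξ => ξ + 6 * tc * u0 ξ with hF
  set g : ℝ → ℝ := Function.invFun F with hg
  have htc0 : 0 < tc := by rw [htc]; positivity
  -- regularity
  have hd0 : Differentiable ℝ u0 := hu0.differentiable (by norm_num)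
  have hu0' : ContDiff ℝ 2 (deriv u0) := by
    exact ((contDiff_succ_iff_deriv (n := 2)).mp (by exact_mod_cast hu0)).2.2
  have hd1 : Differentiable ℝ (deriv u0) := hu0'.differentiable (by norm_num)
  have hu0'' : ContDiff ℝ 1 (deriv (deriv u0)) := by
    exact ((contDiff_succ_iff_deriv (n := 1)).mp (by exact_mod_cast hu0')).2.2
  have hd2 : Differentiable ℝ (deriv (deriv u0)) := hu0''.differentiable (by norm_num)
  -- rewrite iteratedDeriv
  have hiter : iteratedDeriv 3 u0 ξc = deriv (deriv (deriv u0)) ξc := by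
    simp [iteratedDeriv_succ, iteratedDeriv_zero]
  set D3 : ℝ := deriv (deriv (deriv u0)) ξc with hD3
  rw [hiter] at h3 ⊢
  have hD3ne : D3 ≠ 0 := ne_of_gt h3
  -- first derivative value at ξc
  have hd1c : deriv u0 ξc = -1 / (6 * tc) := by
    rw [htc]
    have : deriv u0 ξc = -M / 6 := by linarith [hMdef]
    rw [this]
    field_simp
  -- second derivative vanishes at ξc
  have hd2c : deriv (deriv u0) ξc = 0 := by
    have hmax : IsLocalMax (fun ξ => -6 * deriv u0 ξ) ξc := by
      refine Filter.Eventually.of_forall fun x => ?_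
      by_cases hx : x = ξc
      · simp [hx]
      · have := hstrict x hx
        rw [hMdef] at this
        exact le_of_lt this
    have hder : deriv (fun ξ => -6 * deriv u0 ξ) ξc = 0 := hmax.deriv_eq_zero
    have hder2 : deriv (fun ξ => -6 * deriv u0 ξ) ξc = -6 * deriv (deriv u0) ξc :=
      (((hd1 ξc).hasDerivAt).const_mul (-6 : ℝ)).deriv
    rw [hder2] at hder
    linarith
  -- the centered characteristic map and its derivatives
  set f : ℝ → ℝ := fun ξ => ξ + 6 * tc * u0 ξ - xc with hfdef
  set f1 : ℝ → ℝ := fun ξ => 1 + 6 * tc * deriv u0 ξ with hf1def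
  set f2 : ℝ → ℝ := fun ξ => 6 * tc * deriv (deriv u0) ξ with hf2def
  have h1 : ∀ x, HasDerivAt f (f1 x) x := fun x =>
    ((hasDerivAt_id x).add (((hd0 x).hasDerivAt).const_mul (6 * tc))).sub_const xc
  have h2 : ∀ x, HasDerivAt f1 (f2 x) x := fun x =>
    (((hd1 x).hasDerivAt).const_mul (6 * tc)).const_add 1
  have h3' : HasDerivAt f2 (6 * tc * D3) ξc :=
    ((hd2 ξc).hasDerivAt).const_mul (6 * tc)
  have hf0 : f ξc = 0 := by simp [hfdef, hxc]
  have hf10 : f1 ξc = 0 := by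
    simp only [hf1def, hd1c]
    field_simp
    norm_num
  have hf20 : f2 ξc = 0 := by simp [hf2def, hd2c]
  have hcube : Tendsto (fun ξ => f ξ / (ξ - ξc) ^ 3) (𝓝[≠] ξc) (𝓝 (6 * tc * D3 / 6)) :=
    hopf_cube_limit_aux f f1 f2 ξc (6 * tc * D3) h1 h2 h3' hf0 hf10 hf20
  have hden : (6 : ℝ) * tc * D3 / 6 = tc * D3 := by ring
  rw [hden] at hcube
  -- slope limit of u0
  have hslope : Tendsto (fun ξ => (u0 ξ - uc) / (ξ - ξc)) (𝓝[≠] ξc)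
      (𝓝 (deriv u0 ξc)) := by
    have hs := hasDerivAt_iff_tendsto_slope.mp (hd0 ξc).hasDerivAt
    refine hs.congr fun x => ?_
    rw [slope_def_field, huc]
  have hnum : Tendsto (fun ξ => ((u0 ξ - uc) / (ξ - ξc)) ^ 3) (𝓝[≠] ξc)
      (𝓝 ((deriv u0 ξc) ^ 3)) := hslope.pow 3
  -- combine
  have htcD : tc * D3 ≠ 0 := mul_ne_zero (ne_of_gt htc0) hD3ne
  have hratio : Tendsto (fun ξ => ((u0 ξ - uc) / (ξ - ξc)) ^ 3 / (f ξ / (ξ - ξc) ^ 3))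
      (𝓝[≠] ξc) (𝓝 ((deriv u0 ξc) ^ 3 / (tc * D3))) := hnum.div hcube htcD
  have hh : Tendsto (fun ξ => (u0 ξ - uc) ^ 3 / f ξ) (𝓝[≠] ξc)
      (𝓝 ((deriv u0 ξc) ^ 3 / (tc * D3))) := by
    refine hratio.congr' ?_
    filter_upwards [self_mem_nhdsWithin] with x hx
    have hc : x - ξc ≠ 0 := sub_ne_zero.mpr hx
    by_cases hb : f x = 0
    · simp [hb, div_pow]
    · field_simp
  -- transport through the inverse map
  have hFxc : F ξc = xc := by simp [hF, hxc]
  have hgval : g xc = ξc := by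
    rw [hg, ← hFxc]
    exact Function.leftInverse_invFun hFinj ξc
  have hgtendsto : Tendsto g (𝓝[≠] xc) (𝓝[≠] ξc) := by
    rw [tendsto_nhdsWithin_iff]
    constructor
    · have := hcinv.continuousAt (x := xc)
      rw [ContinuousAt, hgval] at this
      exact this.mono_left nhdsWithin_le_nhds
    · filter_upwards [self_mem_nhdsWithin] with x hx
      intro hgx
      apply hx
      have : F (g x) = x := Function.rightInverse_invFun hFsurj x
      rw [hgx, hFxc] at this
      exact this.symm
  have hcomp := hh.comp hgtendsto
  have hfinal : Tendsto
      (fun x : ℝ => (u0 (g x) - uc) ^ 3 / (x - xc)) (𝓝[≠] xc)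
      (𝓝 ((deriv u0 ξc) ^ 3 / (tc * D3))) := by
    refine hcomp.congr fun x => ?_
    simp only [Function.comp_apply]
    have hFg : F (g x) = x := Function.rightInverse_invFun hFsurj x
    have : f (g x) = x - xc := by
      simp only [hfdef]
      have : g x + 6 * tc * u0 (g x) = x := hFg
      linarith
    rw [this]
  have hval : (deriv u0 ξc) ^ 3 / (tc * D3) = -1 / (216 * tc ^ 4 * D3) := by
    rw [hd1c]
    field_simp
    ring
  rw [hval] at hfinal
  exact hfinal
end

section
/- The function x ↦ sech²(x) has derivative bounded in absolute value by 4/(3√3), and this bound is sharp: sup_{x∈ℝ} |d/dx sech²(x)| = 4/(3√3). Consequently, for every t with 0 ≤ t < √3/8 and every x ∈ ℝ, the map Φ(ξ) = x − 6 t sech²(ξ) is a contraction on ℝ with Lipschitz constant 8t/√3 < 1; hence Φ has a unique fixed point ξ(x,t) ∈ ℝ (solving the characteristic relation x = 6 t sech²(ξ) + ξ), and the iteration ξ_{n+1} = x − 6 t sech²(ξ_n) with ξ₀ = x converges to ξ(x,t). -/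
open Real

lemma sech_sq_hasDerivAt (x : ℝ) :
    HasDerivAt (fun y : ℝ => (1 / Real.cosh y) ^ 2)
      (-2 * Real.sinh x / Real.cosh x ^ 3) x := by
  have h1 : HasDerivAt Real.cosh (Real.sinh x) x := Real.hasDerivAt_cosh x
  have h2 := (h1.inv (Real.cosh_pos x).ne').pow 2
  have heq : (fun y : ℝ => (1 / Real.cosh y) ^ 2) = fun y : ℝ => ((Real.cosh y)⁻¹) ^ 2 := by
    funext y; rw [one_div]
  rw [heq]
  refine h2.congr_deriv ?_
  have hc := (Real.cosh_pos x).ne'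
  field_simp
  rw [Pi.inv_apply, show (2:ℕ) - 1 = 1 from rfl, pow_one]
  field_simp
  push_cast; ring

lemma sech_sq_deriv (x : ℝ) :
    deriv (fun y : ℝ => (1 / Real.cosh y) ^ 2) x = -2 * Real.sinh x / Real.cosh x ^ 3 :=
  (sech_sq_hasDerivAt x).deriv

lemma sech_sq_deriv_bound (x : ℝ) :
    |deriv (fun y : ℝ => (1 / Real.cosh y) ^ 2) x| ≤ 4 / (3 * Real.sqrt 3) := by
  rw [sech_sq_deriv]
  have hc : (0:ℝ) < Real.cosh x := Real.cosh_pos x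
  have hc3 : (0:ℝ) < Real.cosh x ^ 3 := by positivity
  have hs3 : Real.sqrt 3 ^ 2 = 3 := Real.sq_sqrt (by norm_num)
  have hs3p : (0:ℝ) < Real.sqrt 3 := Real.sqrt_pos.mpr (by norm_num)
  rw [abs_div, div_le_div_iff₀ (by positivity) (by positivity)]
  have h1 : |(-2 : ℝ) * Real.sinh x| = 2 * |Real.sinh x| := by
    rw [abs_mul]; norm_num
  have h2 : |Real.cosh x ^ 3| = Real.cosh x ^ 3 := abs_of_pos hc3
  rw [h1, h2]
  have hch : Real.cosh x ^ 2 = 1 + Real.sinh x ^ 2 := by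
    rw [Real.cosh_sq']
  have habs : |Real.sinh x| ^ 2 = Real.sinh x ^ 2 := sq_abs _
  nlinarith [sq_nonneg (2 * Real.cosh x ^ 2 - 3), abs_nonneg (Real.sinh x),
    mul_nonneg (sq_nonneg (2 * Real.cosh x ^ 2 - 3)) (by positivity : (0:ℝ) ≤ Real.cosh x ^ 2 + 3),
    mul_pos hs3p hc3, sq_nonneg (Real.cosh x), hc.le,
    mul_pos (mul_pos hs3p hc3) hc3]

lemma sech_sq_deriv_attains :
    |deriv (fun y : ℝ => (1 / Real.cosh y) ^ 2) (Real.arsinh ((Real.sqrt 2)⁻¹))|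
      = 4 / (3 * Real.sqrt 3) := by
  have h2 : Real.sqrt 2 ^ 2 = 2 := Real.sq_sqrt (by norm_num)
  have h2p : (0:ℝ) < Real.sqrt 2 := Real.sqrt_pos.mpr (by norm_num)
  have h3 : Real.sqrt 3 ^ 2 = 3 := Real.sq_sqrt (by norm_num)
  have h3p : (0:ℝ) < Real.sqrt 3 := Real.sqrt_pos.mpr (by norm_num)
  rw [sech_sq_deriv, Real.sinh_arsinh, Real.cosh_arsinh]
  have hval : (1 : ℝ) + ((Real.sqrt 2)⁻¹) ^ 2 = 3 / 2 := by
    rw [inv_pow, h2]; norm_num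
  rw [hval]
  have hsq : Real.sqrt (3/2) = Real.sqrt 3 / Real.sqrt 2 := by
    rw [show (3:ℝ)/2 = 3/2 from rfl, Real.sqrt_div' 3 (by norm_num)]
  rw [hsq, abs_div]
  have hneg : (-2:ℝ) * (Real.sqrt 2)⁻¹ ≤ 0 := by
    have : (0:ℝ) ≤ 2 * (Real.sqrt 2)⁻¹ := by positivity
    linarith
  rw [abs_of_nonpos hneg, abs_of_pos (by positivity : (0:ℝ) < (Real.sqrt 3 / Real.sqrt 2) ^ 3)]
  have h24 : Real.sqrt 2 ^ 4 = 4 := by nlinarith [h2]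
  have h33 : Real.sqrt 3 ^ 3 = 3 * Real.sqrt 3 := by
    rw [pow_succ, h3]
  field_simp
  ring_nf
  nlinarith [h24, h33, h2, h3, h2p, h3p]

/-- The derivative of `sech²` is bounded in absolute value
by `4/(3√3)`, sharply; consequently, for `0 ≤ t < √3/8` and any `x ∈ ℝ` the
map `Φ(ξ) = x − 6 t sech²(ξ)` is a contraction with Lipschitz constant
`8t/√3 < 1`, it has a unique fixed point `ξ(x,t)` (solving
`x = 6 t sech²(ξ) + ξ`), and the iteration `ξ_{n+1} = Φ(ξ_n)`, `ξ₀ = x`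
converges to it. -/
theorem sech_sq_characteristic_iteration :
    (∀ x : ℝ, |deriv (fun y : ℝ => (1 / Real.cosh y) ^ 2) x| ≤ 4 / (3 * Real.sqrt 3)) ∧
    (⨆ x : ℝ, |deriv (fun y : ℝ => (1 / Real.cosh y) ^ 2) x|) = 4 / (3 * Real.sqrt 3) ∧
    (∀ t : ℝ, 0 ≤ t → t < Real.sqrt 3 / 8 → ∀ x : ℝ,
      (∀ ξ₁ ξ₂ : ℝ,
        |(x - 6 * t * (1 / Real.cosh ξ₁) ^ 2) - (x - 6 * t * (1 / Real.cosh ξ₂) ^ 2)|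
          ≤ (8 * t / Real.sqrt 3) * |ξ₁ - ξ₂|) ∧
      8 * t / Real.sqrt 3 < 1 ∧
      (∃! ξ : ℝ, x = 6 * t * (1 / Real.cosh ξ) ^ 2 + ξ) ∧
      (∀ ξ : ℝ, x = 6 * t * (1 / Real.cosh ξ) ^ 2 + ξ →
        Filter.Tendsto
          (fun n : ℕ => (fun z : ℝ => x - 6 * t * (1 / Real.cosh z) ^ 2)^[n] x)
          Filter.atTop (nhds ξ))) := by
  have h3 : Real.sqrt 3 ^ 2 = 3 := Real.sq_sqrt (by norm_num)
  have h3p : (0:ℝ) < Real.sqrt 3 := Real.sqrt_pos.mpr (by norm_num)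
  refine ⟨sech_sq_deriv_bound, ?_, ?_⟩
  · apply le_antisymm
    · exact ciSup_le sech_sq_deriv_bound
    · have hb : BddAbove (Set.range fun x : ℝ =>
          |deriv (fun y : ℝ => (1 / Real.cosh y) ^ 2) x|) :=
        ⟨4 / (3 * Real.sqrt 3), by rintro _ ⟨x, rfl⟩; exact sech_sq_deriv_bound x⟩
      calc (4 : ℝ) / (3 * Real.sqrt 3)
          = |deriv (fun y : ℝ => (1 / Real.cosh y) ^ 2) (Real.arsinh ((Real.sqrt 2)⁻¹))| :=
            sech_sq_deriv_attains.symm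
        _ ≤ _ := le_ciSup hb _
  · intro t ht ht' x
    set Φ : ℝ → ℝ := fun z => x - 6 * t * (1 / Real.cosh z) ^ 2 with hΦ
    have hKnn : (0:ℝ) ≤ 8 * t / Real.sqrt 3 := by positivity
    have hderiv : ∀ z : ℝ, HasDerivAt Φ
        (-(6 * t * (-2 * Real.sinh z / Real.cosh z ^ 3))) z := fun z => by
      have := (hasDerivAt_const z x).sub ((sech_sq_hasDerivAt z).const_mul (6 * t))
      refine this.congr_deriv ?_
      ring
    have hbound : ∀ z : ℝ, |deriv Φ z| ≤ 8 * t / Real.sqrt 3 := by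
      intro z
      rw [(hderiv z).deriv]
      have : |(-(6 * t * (-2 * Real.sinh z / Real.cosh z ^ 3)))|
          = (6 * t) * |(-2 * Real.sinh z / Real.cosh z ^ 3)| := by
        rw [abs_neg, abs_mul, abs_of_nonneg (by linarith : (0:ℝ) ≤ 6 * t)]
      rw [this]
      have hb := sech_sq_deriv_bound z
      rw [sech_sq_deriv] at hb
      have hstep : (6 * t) * |(-2 * Real.sinh z / Real.cosh z ^ 3)|
          ≤ (6 * t) * (4 / (3 * Real.sqrt 3)) :=
        mul_le_mul_of_nonneg_left hb (by linarith)
      have heq : (6 * t) * (4 / (3 * Real.sqrt 3)) = 8 * t / Real.sqrt 3 := by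
        field_simp; ring
      linarith [hstep, heq ▸ hstep]
    set K : NNReal := Real.toNNReal (8 * t / Real.sqrt 3) with hK
    have hKcoe : (K : ℝ) = 8 * t / Real.sqrt 3 := Real.coe_toNNReal _ hKnn
    have hlip : LipschitzWith K Φ := by
      apply lipschitzWith_of_nnnorm_deriv_le
      · exact fun z => (hderiv z).differentiableAt
      · intro z
        rw [← NNReal.coe_le_coe, coe_nnnorm, hKcoe, Real.norm_eq_abs]
        exact hbound z
    have hcontr : ∀ ξ₁ ξ₂ : ℝ, |Φ ξ₁ - Φ ξ₂| ≤ (8 * t / Real.sqrt 3) * |ξ₁ - ξ₂| := by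
      intro ξ₁ ξ₂
      have := hlip.dist_le_mul ξ₁ ξ₂
      rwa [Real.dist_eq, Real.dist_eq, hKcoe] at this
    have hlt : 8 * t / Real.sqrt 3 < 1 := by
      rw [div_lt_one h3p]; linarith
    have hC : ContractingWith K Φ := ⟨by rw [← NNReal.coe_lt_one, hKcoe]; exact hlt, hlip⟩
    have hiff : ∀ ξ : ℝ, (x = 6 * t * (1 / Real.cosh ξ) ^ 2 + ξ) ↔ Function.IsFixedPt Φ ξ := by
      intro ξ
      simp only [Function.IsFixedPt, hΦ]
      constructor <;> intro h <;> linarith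
    refine ⟨hcontr, hlt, ?_, ?_⟩
    · exact ⟨ContractingWith.fixedPoint Φ hC,
        (hiff _).mpr (hC.fixedPoint_isFixedPt),
        fun y hy => hC.fixedPoint_unique ((hiff y).mp hy)⟩
    · intro ξ hξ
      have : ξ = ContractingWith.fixedPoint Φ hC := hC.fixedPoint_unique ((hiff ξ).mp hξ)
      rw [this]
      exact hC.tendsto_iterate_fixedPoint x
end

section
/- Let a > 0 and let f : ℂ → ℂ be holomorphic on the strip S = {z ∈ ℂ : |Im z| < a}. Fix 0 < b < a and assume: (i) for each y with |y| ≤ b the function x ↦ f(x + iy) is integrable on ℝ, with C := sup_{|y| ≤ b} ∫_ℝ |f(x + iy)| dx < ∞; and (ii) f(x + iy) → 0 as |x| → ∞, uniformly for |y| ≤ b. Then the Fourier transform f̂(k) = ∫_ℝ f(x) e^{−ikx} dx decays exponentially: |f̂(k)| ≤ C e^{−b|k|} for all k ∈ ℝ. -/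
open MeasureTheory Filter Complex intervalIntegral


/-- If `f` is holomorphic on the strip `|Im z| < a` and, for
some `0 < b < a`, the horizontal translates `x ↦ f(x + iy)` (for `|y| ≤ b`)
are integrable with `∫|f(·+iy)| ≤ C` and `f(x+iy) → 0` as `|x| → ∞` uniformly
in `|y| ≤ b`, then the Fourier transform of `f` decays exponentially:
`|f̂(k)| ≤ C e^{−b|k|}`. -/
theorem fourier_decay_of_analytic_in_strip
    (a b C : ℝ) (ha : 0 < a) (hb0 : 0 < b) (hba : b < a)
    (f : ℂ → ℂ)
    (hf : DifferentiableOn ℂ f {z : ℂ | |z.im| < a})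
    (hint : ∀ y : ℝ, |y| ≤ b →
      MeasureTheory.Integrable (fun x : ℝ => f ((x : ℂ) + (y : ℂ) * Complex.I)))
    (hC : ∀ y : ℝ, |y| ≤ b →
      (∫ x : ℝ, ‖f ((x : ℂ) + (y : ℂ) * Complex.I)‖) ≤ C)
    (hdecay : ∀ ε : ℝ, 0 < ε → ∃ R : ℝ, ∀ x y : ℝ, |y| ≤ b → R ≤ |x| →
      ‖f ((x : ℂ) + (y : ℂ) * Complex.I)‖ ≤ ε) :
    ∀ k : ℝ,
      ‖∫ x : ℝ, f (x : ℂ) * Complex.exp (-Complex.I * (k : ℂ) * (x : ℂ))‖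
        ≤ C * Real.exp (-b * |k|) := by
  intro k
  set y₀ : ℝ := if 0 ≤ k then -b else b with hy₀def
  have hy₀abs : |y₀| = b := by
    rcases le_or_gt 0 k with h | h
    · simp [hy₀def, h, abs_of_pos hb0]
    · simp [hy₀def, not_le.mpr h, abs_of_pos hb0]
  have hy₀le : |y₀| ≤ b := hy₀abs.le
  have hy1 : -b ≤ y₀ := by rw [← hy₀abs]; exact neg_abs_le y₀
  have hy2 : y₀ ≤ b := by rw [← hy₀abs]; exact le_abs_self y₀
  have hky : k * y₀ = -b * |k| := by
    rcases le_or_gt 0 k with h | h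
    · rw [_root_.abs_of_nonneg h]; simp [hy₀def, h]; ring
    · rw [_root_.abs_of_neg h]; simp [hy₀def, not_le.mpr h]; ring
  set g : ℂ → ℂ := fun z => f z * Complex.exp (-Complex.I * (k : ℂ) * z) with hgdef
  -- norm formula
  have hnorm : ∀ x y : ℝ, ‖g ((x : ℂ) + (y : ℂ) * Complex.I)‖
      = ‖f ((x : ℂ) + (y : ℂ) * Complex.I)‖ * Real.exp (k * y) := by
    intro x y
    rw [hgdef]
    simp only [norm_mul, Complex.norm_exp]
    congr 2
    simp [Complex.mul_re, Complex.mul_im]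
  -- integrability of translates of g
  have hgI : ∀ y : ℝ, |y| ≤ b →
      Integrable (fun x : ℝ => g ((x : ℂ) + (y : ℂ) * Complex.I)) := by
    intro y hy
    have hmeas : AEStronglyMeasurable
        (fun x : ℝ => Complex.exp (-Complex.I * (k : ℂ) * ((x : ℂ) + (y : ℂ) * Complex.I)))
        volume := by
      apply Continuous.aestronglyMeasurable
      exact Complex.continuous_exp.comp (by fun_prop)
    have h2 := (hint y hy).bdd_mul hmeas (c := Real.exp (k * y)) (Filter.Eventually.of_forall fun x => by
      rw [Complex.norm_exp]
      apply le_of_eq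
      congr 1
      simp [Complex.mul_re, Complex.mul_im])
    apply h2.congr
    filter_upwards with x
    rw [hgdef]; ring
  -- differentiability of g on the strip
  have hg : DifferentiableOn ℂ g {z : ℂ | |z.im| < a} := by
    apply hf.mul
    apply Differentiable.differentiableOn
    exact (Differentiable.const_mul differentiable_id _).cexp
  -- rectangle contour identity
  have key : ∀ T : ℝ,
      (∫ x : ℝ in (-T)..T, g x) - (∫ x : ℝ in (-T)..T, g ((x : ℂ) + (y₀ : ℂ) * Complex.I))
        + Complex.I • (∫ y : ℝ in (0 : ℝ)..y₀, g ((T : ℂ) + (y : ℂ) * Complex.I))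
        - Complex.I • (∫ y : ℝ in (0 : ℝ)..y₀, g (((-T : ℝ) : ℂ) + (y : ℂ) * Complex.I)) = 0 := by
    intro T
    have h := Complex.integral_boundary_rect_eq_zero_of_differentiableOn g
      ((-T : ℝ) : ℂ) ((T : ℂ) + (y₀ : ℂ) * Complex.I)
      (by
        apply hg.mono
        intro z hz
        rw [Complex.mem_reProdIm] at hz
        have h2 := hz.2
        simp only [Complex.ofReal_im, Complex.add_im, Complex.mul_im, Complex.I_im,
          Complex.ofReal_re, Complex.I_re, mul_zero, mul_one, zero_add] at h2
        have hmem : z.im ∈ Set.uIcc (0 : ℝ) y₀ := by simpa using h2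
        have hzb : |z.im| ≤ b := by
          rcases Set.mem_uIcc.mp hmem with ⟨h3, h4⟩ | ⟨h3, h4⟩ <;>
            exact abs_le.mpr ⟨by linarith, by linarith⟩
        exact lt_of_le_of_lt hzb hba)
    simpa using h
  -- interval integrals tend to the full integrals
  have hI1 : Tendsto (fun T : ℝ => ∫ x : ℝ in (-T)..T, g x) atTop
      (nhds (∫ x : ℝ, g x)) := by
    have h0 : Integrable (fun x : ℝ => g x) := by
      have := hgI 0 (by simpa using hb0.le)
      apply this.congr
      filter_upwards with x
      norm_num
    exact intervalIntegral_tendsto_integral h0 tendsto_neg_atTop_atBot tendsto_id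
  have hI2 : Tendsto (fun T : ℝ => ∫ x : ℝ in (-T)..T, g ((x : ℂ) + (y₀ : ℂ) * Complex.I))
      atTop (nhds (∫ x : ℝ, g ((x : ℂ) + (y₀ : ℂ) * Complex.I))) :=
    intervalIntegral_tendsto_integral (hgI y₀ hy₀le) tendsto_neg_atTop_atBot tendsto_id
  -- vertical integrals tend to zero
  have hvert : ∀ u : ℝ → ℝ, (∀ T : ℝ, |T| ≤ |u T|) →
      Tendsto (fun T : ℝ => ∫ y : ℝ in (0 : ℝ)..y₀, g (((u T : ℝ) : ℂ) + (y : ℂ) * Complex.I))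
        atTop (nhds 0) := by
    intro u hu
    rw [NormedAddCommGroup.tendsto_nhds_zero]
    intro ε hε
    have hden : 0 < 2 * (b * Real.exp (b * |k|) + 1) := by positivity
    set ε' := ε / (2 * (b * Real.exp (b * |k|) + 1)) with hε'def
    have hε' : 0 < ε' := by positivity
    obtain ⟨R, hR⟩ := hdecay ε' hε'
    filter_upwards [eventually_ge_atTop (max R 0)] with T hT
    have hTR : R ≤ |u T| :=
      le_trans (le_trans (le_trans (le_max_left R 0) hT) (le_abs_self T)) (hu T)
    have hbound : ∀ y ∈ Set.uIcc (0 : ℝ) y₀,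
        ‖g (((u T : ℝ) : ℂ) + (y : ℂ) * Complex.I)‖ ≤ ε' * Real.exp (b * |k|) := by
      intro y hy
      have hyb : |y| ≤ b := by
        rcases Set.mem_uIcc.mp hy with ⟨h3, h4⟩ | ⟨h3, h4⟩ <;>
          exact abs_le.mpr ⟨by linarith, by linarith⟩
      rw [hnorm]
      have h1 : ‖f (((u T : ℝ) : ℂ) + (y : ℂ) * Complex.I)‖ ≤ ε' := hR (u T) y hyb hTR
      have h2 : Real.exp (k * y) ≤ Real.exp (b * |k|) := by
        apply Real.exp_le_exp.mpr
        calc k * y ≤ |k * y| := le_abs_self _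
          _ = |k| * |y| := abs_mul k y
          _ ≤ |k| * b := by nlinarith [abs_nonneg k]
          _ = b * |k| := mul_comm _ _
      exact mul_le_mul h1 h2 (Real.exp_nonneg _) hε'.le
    have := intervalIntegral.norm_integral_le_of_norm_le_const
      (C := ε' * Real.exp (b * |k|)) (fun y hy => hbound y (Set.uIoc_subset_uIcc hy))
    calc ‖∫ y : ℝ in (0 : ℝ)..y₀, g (((u T : ℝ) : ℂ) + (y : ℂ) * Complex.I)‖
        ≤ ε' * Real.exp (b * |k|) * |y₀ - 0| := this
      _ = ε' * (Real.exp (b * |k|) * b) := by rw [sub_zero, hy₀abs]; ring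
      _ < ε := by
          rw [hε'def]
          rw [div_mul_eq_mul_div, div_lt_iff₀ hden]
          nlinarith [Real.exp_pos (b * |k|)]
  have hV1 := hvert (fun T => T) (fun T => le_refl _)
  have hV2 := hvert (fun T => -T) (fun T => by rw [abs_neg])
  -- contour shift
  have heq : (∫ x : ℝ, g x) = ∫ x : ℝ, g ((x : ℂ) + (y₀ : ℂ) * Complex.I) := by
    have hlim : Tendsto (fun T : ℝ =>
        (∫ x : ℝ in (-T)..T, g ((x : ℂ) + (y₀ : ℂ) * Complex.I))
          + Complex.I • (∫ y : ℝ in (0 : ℝ)..y₀, g (((-T : ℝ) : ℂ) + (y : ℂ) * Complex.I))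
          - Complex.I • (∫ y : ℝ in (0 : ℝ)..y₀, g ((T : ℂ) + (y : ℂ) * Complex.I)))
        atTop (nhds ((∫ x : ℝ, g ((x : ℂ) + (y₀ : ℂ) * Complex.I))
          + Complex.I • (0 : ℂ) - Complex.I • (0 : ℂ))) :=
      (hI2.add (hV2.const_smul Complex.I)).sub (hV1.const_smul Complex.I)
    have hfun : (fun T : ℝ =>
        (∫ x : ℝ in (-T)..T, g ((x : ℂ) + (y₀ : ℂ) * Complex.I))
          + Complex.I • (∫ y : ℝ in (0 : ℝ)..y₀, g (((-T : ℝ) : ℂ) + (y : ℂ) * Complex.I))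
          - Complex.I • (∫ y : ℝ in (0 : ℝ)..y₀, g ((T : ℂ) + (y : ℂ) * Complex.I)))
        = fun T : ℝ => ∫ x : ℝ in (-T)..T, g x := by
      funext T
      have hkT := key T
      simp only [smul_eq_mul] at hkT ⊢
      linear_combination (-1 : ℂ) * hkT
    rw [hfun] at hlim
    simp only [smul_zero, add_zero, sub_zero] at hlim
    exact tendsto_nhds_unique hI1 hlim
  -- final estimate
  calc ‖∫ x : ℝ, f (x : ℂ) * Complex.exp (-Complex.I * (k : ℂ) * (x : ℂ))‖
      = ‖∫ x : ℝ, g ((x : ℂ) + (y₀ : ℂ) * Complex.I)‖ := by rw [← heq]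
    _ ≤ ∫ x : ℝ, ‖g ((x : ℂ) + (y₀ : ℂ) * Complex.I)‖ := norm_integral_le_integral_norm _
    _ = ∫ x : ℝ, ‖f ((x : ℂ) + (y₀ : ℂ) * Complex.I)‖ * Real.exp (k * y₀) := by
        congr 1; funext x; exact hnorm x y₀
    _ = (∫ x : ℝ, ‖f ((x : ℂ) + (y₀ : ℂ) * Complex.I)‖) * Real.exp (k * y₀) :=
        integral_mul_const _ _
    _ ≤ C * Real.exp (k * y₀) :=
        mul_le_mul_of_nonneg_right (hC y₀ hy₀le) (Real.exp_nonneg _)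
    _ = C * Real.exp (-b * |k|) := by rw [hky]
end
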